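/- For every simplicial set X, the following four conditions are equivalent: (1) every edge of X is invertible; (2) the unique map X → Δ[0] has the right lifting property with respect to δ : Δ[1] → bΔ[1]; (3) the inclusion ε_X : G(X) → X is an isomorphism (i.e., G(X) = X); (4) X is isomorphic to G(Y) for some simplicial set Y. -/

import Mathlib

open CategoryTheory CategoryTheory.Limits Opposite

namespace IndexedPaper
/-- The chaotic preorder on two objects. -/
inductive TwoObj : Type
  | zero
  | one

open Simplicial

instance : Preorder TwoObj where
  le _ _ := True
  le_refl _ := trivial
  le_trans _ _ _ _ _ := trivial

/-- `bΔ[1]`, the nerve of the groupoid with two objects and exactly one morphism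
between every ordered pair of objects. -/
def bDelta1 : SSet := CategoryTheory.nerve TwoObj

/-- `δ : Δ[1] ⟶ bΔ[1]`, classifying the morphism from the first object to the second. -/
noncomputable def deltaB : Δ[1] ⟶ bDelta1 :=
  (SSet.yonedaEquiv (X := bDelta1) (n := ⦋1⦌)).symm
    (CategoryTheory.ComposableArrows.mk₁ (homOfLE trivial : TwoObj.zero ⟶ TwoObj.one))

/-- An edge `x : Δ[1] ⟶ X` is invertible if it extends along `δ` to `bΔ[1]`. -/
def IsInvertibleEdge {X : SSet} (x : Δ[1] ⟶ X) : Prop :=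
  ∃ y : bDelta1 ⟶ X, deltaB ≫ y = x

/-- A Kan complex: every horn (`n ≥ 1`, `0 ≤ k ≤ n`) has a filler. -/
def IsKanComplex (K : SSet) : Prop :=
  ∀ ⦃n : ℕ⦄, 1 ≤ n → ∀ (k : Fin (n + 1)) (f : (Λ[n, k] : SSet) ⟶ K),
    ∃ g : Δ[n] ⟶ K, Λ[n, k].ι ≫ g = f

/-- A Kan fibration: right lifting property with respect to all horn inclusions
(`n ≥ 1`, `0 ≤ k ≤ n`). -/
def IsKanFibration {X Y : SSet} (p : X ⟶ Y) : Prop :=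
  ∀ ⦃n : ℕ⦄, 1 ≤ n → ∀ (k : Fin (n + 1)), HasLiftingProperty (Λ[n, k].ι) p

/-! ### Yoneda naturality lemmas -/

lemma yE_comp {X Y : SSet} (f : X ⟶ Y) {n : SimplexCategory}
    (g : SSet.stdSimplex.obj n ⟶ X) :
    SSet.yonedaEquiv (X := Y) (n := n) (g ≫ f) = f.app (op n) (SSet.yonedaEquiv (X := X) (n := n) g) := rfl

lemma yE_symm_comp {X Y : SSet} (f : X ⟶ Y) {n : SimplexCategory} (x : X.obj (op n)) :
    (SSet.yonedaEquiv (X := Y) (n := n)).symm (f.app (op n) x) = (SSet.yonedaEquiv (X := X) (n := n)).symm x ≫ f := by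
  apply (SSet.yonedaEquiv (X := Y) (n := n)).injective
  rw [Equiv.apply_symm_apply, yE_comp, Equiv.apply_symm_apply]

lemma yE_symm_map {X : SSet} {m n : SimplexCategory} (f : m ⟶ n) (x : X.obj (op n)) :
    (SSet.yonedaEquiv (X := X) (n := m)).symm (X.map f.op x) =
      SSet.stdSimplex.map f ≫ (SSet.yonedaEquiv (X := X) (n := n)).symm x := by
  rw [SSet.yonedaEquiv_symm_naturality_left]

/-! ### The functor `G` -/

/-- The set of simplices of `X` all of whose edges are invertible. -/
def GSet (X : SSet) (n : SimplexCategoryᵒᵖ) : Set (X.obj n) :=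
  {x | ∀ e : Δ[1] ⟶ SSet.stdSimplex.obj n.unop,
    IsInvertibleEdge (e ≫ (SSet.yonedaEquiv (X := X) (n := n.unop)).symm x)}

/-- `G X`, the simplicial subset of `X` consisting of the simplices all of whose
edges are invertible. -/
def GObj (X : SSet) : SSet where
  obj n := GSet X n
  map := fun {n m} f => TypeCat.ofHom fun x => ⟨X.map f x.1, by
    intro e
    have h := x.2 (e ≫ SSet.stdSimplex.map f.unop)
    have heq : (SSet.yonedaEquiv (X := X) (n := m.unop)).symm (X.map f x.1) =
        SSet.stdSimplex.map f.unop ≫ (SSet.yonedaEquiv (X := X) (n := n.unop)).symm x.1 :=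
      yE_symm_map f.unop x.1
    rw [heq, ← Category.assoc]
    exact h⟩
  map_id n := by
    ext x
    exact X.map_id_apply n x.1
  map_comp f g := by
    ext x
    exact X.map_comp_apply f g x.1

/-- `ε_X : G X ⟶ X`, the inclusion. -/
def epsilon (X : SSet) : GObj X ⟶ X where
  app n := TypeCat.ofHom fun x => x.1
  naturality _ _ _ := rfl

/-- The functorial action of `G` on a map of simplicial sets. -/
def Gmap {X Y : SSet} (f : X ⟶ Y) : GObj X ⟶ GObj Y where
  app n := TypeCat.ofHom fun x => ⟨f.app n x.1, by
    intro e
    obtain ⟨y, hy⟩ := x.2 e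
    refine ⟨y ≫ f, ?_⟩
    have : (SSet.yonedaEquiv (X := Y) (n := n.unop)).symm (f.app n x.1) =
        (SSet.yonedaEquiv (X := X) (n := n.unop)).symm x.1 ≫ f := yE_symm_comp f x.1
    simp only [this, ← Category.assoc, hy]⟩
  naturality n m g := by
    ext x
    apply Subtype.ext
    exact NatTrans.naturality_apply f g x.1

/-!
Invertible edges are preserved by maps and every edge of `bΔ[1]` is invertible, so a map out of
`bΔ[1]`, or out of any simplicial set whose edges are all invertible, factors through `G`. Hence
an edge of `G(Y)`, being invertible in `Y` via some `bΔ[1] → Y`, is invertible in `G(Y)` itself,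
and if all edges of `X` are invertible the factorisation of `𝟙 X` inverts `ε_X`. Since `Δ[0]` is
terminal, lifting against `X → Δ[0]` just means extending maps `Δ[1] → X` along `δ`.
-/

lemma hasLiftingProperty_iff_of_isTerminal {C : Type*} [Category C] {A B X Y : C}
    (i : A ⟶ B) (p : X ⟶ Y) (hY : IsTerminal Y) :
    HasLiftingProperty i p ↔ ∀ f : A ⟶ X, ∃ g : B ⟶ X, i ≫ g = f := by
  refine ⟨fun _ f => ?_, fun h => ⟨fun {f _} _ => ?_⟩⟩
  · have sq : CommSq f i p (hY.from B) := ⟨hY.hom_ext _ _⟩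
    exact ⟨sq.lift, sq.fac_left⟩
  · obtain ⟨g, hg⟩ := h f
    exact ⟨⟨⟨g, hg, hY.hom_ext _ _⟩⟩⟩

lemma IsInvertibleEdge.comp {X Y : SSet} {x : Δ[1] ⟶ X} (hx : IsInvertibleEdge x) (f : X ⟶ Y) :
    IsInvertibleEdge (x ≫ f) := by
  obtain ⟨y, rfl⟩ := hx
  exact ⟨y ≫ f, (Category.assoc _ _ _).symm⟩

lemma bDelta1.isInvertibleEdge (x : Δ[1] ⟶ bDelta1) : IsInvertibleEdge x := by
  let σ := SSet.yonedaEquiv (X := bDelta1) (n := ⦋1⦌) x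
  let F : TwoObj ⥤ TwoObj :=
    Monotone.functor (f := fun t => TwoObj.casesOn t (σ.obj 0) (σ.obj 1)) fun _ _ _ => trivial
  refine ⟨nerveMap F, SSet.yonedaEquiv.injective ?_⟩
  -- morphisms of `TwoObj` are unique, so an edge of its nerve is determined by its endpoints
  exact ComposableArrows.ext₁ rfl rfl (Subsingleton.elim _ _)

instance mono_epsilon (X : SSet) : Mono (epsilon X) :=
  have (n : SimplexCategoryᵒᵖ) : Mono ((epsilon X).app n) :=
    (mono_iff_injective _).mpr Subtype.val_injective
  NatTrans.mono_of_mono_app _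

lemma isInvertibleEdge_comp_epsilon {Y : SSet} (x : Δ[1] ⟶ GObj Y) :
    IsInvertibleEdge (x ≫ epsilon Y) := by
  have h := (SSet.yonedaEquiv (X := GObj Y) (n := ⦋1⦌) x).2 (𝟙 _)
  have hx : (SSet.yonedaEquiv (X := Y) (n := ⦋1⦌)).symm (SSet.yonedaEquiv x).1 = x ≫ epsilon Y :=
    SSet.yonedaEquiv.symm_apply_apply (x ≫ epsilon Y)
  rwa [Category.id_comp, hx] at h

def GObj.lift {W Y : SSet} (f : W ⟶ Y) (hW : ∀ x : Δ[1] ⟶ W, IsInvertibleEdge x) :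
    W ⟶ GObj Y where
  app n := TypeCat.ofHom fun w => ⟨f.app n w, fun e => by
    simpa only [Category.assoc, SSet.yonedaEquiv_symm_comp] using
      (hW (e ≫ SSet.yonedaEquiv.symm w)).comp f⟩
  naturality n m φ := by
    ext w
    apply Subtype.ext
    exact NatTrans.naturality_apply f φ w

@[simp]
lemma GObj.lift_epsilon {W Y : SSet} (f : W ⟶ Y) (hW : ∀ x : Δ[1] ⟶ W, IsInvertibleEdge x) :
    GObj.lift f hW ≫ epsilon Y = f :=
  rfl

lemma GObj.isInvertibleEdge {Y : SSet} (x : Δ[1] ⟶ GObj Y) : IsInvertibleEdge x := by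
  obtain ⟨y, hy⟩ := isInvertibleEdge_comp_epsilon x
  refine ⟨GObj.lift y bDelta1.isInvertibleEdge, ?_⟩
  rw [← cancel_mono (epsilon Y), Category.assoc, GObj.lift_epsilon, hy]

lemma isIso_epsilon_of_forall_isInvertibleEdge {X : SSet}
    (hX : ∀ x : Δ[1] ⟶ X, IsInvertibleEdge x) : IsIso (epsilon X) :=
  ⟨GObj.lift (𝟙 X) hX, by rw [← cancel_mono (epsilon X)]; simp, GObj.lift_epsilon _ _⟩

/-- The four characterizations of simplicial sets all of whose edges
are invertible. -/
theorem invertible_edges_tfae (X : SSet) :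
    List.TFAE [
      ∀ x : Δ[1] ⟶ X, IsInvertibleEdge x,
      ∀ t : X ⟶ Δ[0], HasLiftingProperty deltaB t,
      IsIso (epsilon X),
      ∃ Y : SSet, Nonempty (X ≅ GObj Y)] := by
  have hΔ₀ := SSet.stdSimplex.isTerminalObj₀
  tfae_have 1 → 2 := fun h t =>
    (hasLiftingProperty_iff_of_isTerminal deltaB t hΔ₀).mpr h
  tfae_have 2 → 1 := fun h =>
    (hasLiftingProperty_iff_of_isTerminal deltaB _ hΔ₀).mp (h (hΔ₀.from X))
  tfae_have 1 → 3 := isIso_epsilon_of_forall_isInvertibleEdge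
  tfae_have 3 → 4 := fun _ => ⟨X, ⟨(asIso (epsilon X)).symm⟩⟩
  tfae_have 4 → 1
  | ⟨_, ⟨φ⟩⟩, x => by
    simpa using (GObj.isInvertibleEdge (x ≫ φ.hom)).comp φ.inv
  tfae_finish

end IndexedPaper
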